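/- Let ℓ be a field with an involution x ↦ x̄ and let g ∈ GL₃(ℓ). Suppose there exist x, y, z, w ∈ ℓ with x ≠ 0 such that g · [[1,-x̄,y],[0,1,x],[0,0,1]] = [[1,-z̄,w],[0,1,z],[0,0,1]] · g. Then g is an upper triangular matrix, i.e. its entries g₂₁, g₃₁, g₃₂ are all zero. -/
import Mathlib


/-- The upper unitriangular matrix `u_a(x,y) = [[1, -x̄, y],[0,1,x],[0,0,1]]`,
where `x̄ = σ x` for an involution `σ` of the field `ℓ`. -/
def ua {ℓ : Type*} [Field ℓ] (σ : ℓ ≃+* ℓ) (x y : ℓ) : Matrix (Fin 3) (Fin 3) ℓ :=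
  !![1, -σ x, y; 0, 1, x; 0, 0, 1]

/-- if an invertible `g` satisfies `g·u_a(x,y) = u_a(z,w)·g` with `x ≠ 0`,
then `g` is upper triangular. -/
theorem stmt6 (ℓ : Type*) [Field ℓ] (σ : ℓ ≃+* ℓ) (hσ : ∀ a, σ (σ a) = a)
    (g : Matrix (Fin 3) (Fin 3) ℓ) (hg : IsUnit g)
    (x y z w : ℓ) (hx : x ≠ 0)
    (h : g * ua σ x y = ua σ z w * g) :
    g 1 0 = 0 ∧ g 2 0 = 0 ∧ g 2 1 = 0 := by
  have hσx : σ x ≠ 0 := fun h0 => hx (by simpa using (map_eq_zero σ).mp h0)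
  have e21 := congrFun (congrFun h 2) 1
  have e22 := congrFun (congrFun h 2) 2
  have e11 := congrFun (congrFun h 1) 1
  simp [ua, Matrix.mul_apply, Fin.sum_univ_three] at e21 e22 e11
  have h20 : g 2 0 = 0 := e21.resolve_right hx
  have h21 : g 2 1 = 0 := by
    rcases mul_eq_zero.mp (by linear_combination e22 - y * h20 : g 2 1 * x = 0) with h' | h'
    · exact h'
    · exact absurd h' hx
  have h10 : g 1 0 = 0 := by
    rcases mul_eq_zero.mp (by linear_combination -e11 - z * h21 : g 1 0 * σ x = 0) with h' | h'
    · exact h'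
    · exact absurd h' hσx
  exact ⟨h10, h20, h21⟩
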